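/- arXiv:2301.11201 — 6 statements merged into one kernel-verified Lean document; each statement's English description precedes it below -/
import Mathlib

section
/- Let μ be feasible for the primal LP of the LAP and (α, β) be feasible for the dual LP of the LAP. Then the following are equivalent: (a) μ lies in the relative interior of the set of optimal solutions of the primal LP and (α, β) lies in the relative interior of the set of optimal solutions of the dual LP; (b) for all v ∈ V and ℓ ∈ L_v, μ_v(ℓ) > 0 if and only if α_v + β_ℓ = θ_v(ℓ). -/
/-!
Weak duality expresses the duality gap as `∑ μ v ℓ * (θ v ℓ - α v - β ℓ)`, so with strong duality a
feasible pair is optimal iff complementary slackness holds. Strong duality comes from an optimal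
assignment `x`: every cycle of its exchange graph (`v → u` when `x u ∈ Lab v`, of cost
`θ v (x u) - θ v (x v)`) has nonnegative cost, since rotating `x` along it is feasible, so
shortest-walk potentials `π` exist and `α v = θ v (x v) - π v`, `β ℓ = π (x⁻¹ ℓ)` is dual optimal.

A point of a convex set is relatively interior iff every segment ending at it extends beyond it
within the set, so a linear function extremal at such a point is constant on the set. Thus a pair
tight at a relatively interior `(α, β)` is tight for all dual optima; lowering its cost slightly
shows that some optimal assignment uses it, and the indicator of that assignment forces `μ > 0`
there. Conversely, under strict complementarity, segments through `μ` or `(α, β)` extend a little,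
since the only inequalities that might fail are strict there.
-/

open Finset

section LAPDefs

variable {V L : Type*} [Fintype V] [Fintype L] [DecidableEq V] [DecidableEq L]

/-- Feasibility for the primal LP of the LAP: `μ` is supported on allowed pairs,
nonnegative, each vertex's row sums to one and each label's column sums to one. -/
def PrimalFeasible (Lab : V → Finset L) (μ : V → L → ℝ) : Prop :=
  (∀ v ℓ, ℓ ∈ Lab v → 0 ≤ μ v ℓ) ∧
  (∀ v ℓ, ℓ ∉ Lab v → μ v ℓ = 0) ∧
  (∀ v, ∑ ℓ ∈ Lab v, μ v ℓ = 1) ∧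
  (∀ ℓ : L, ∑ v ∈ univ.filter (fun v => ℓ ∈ Lab v), μ v ℓ = 1)

/-- Objective of the primal LP of the LAP. -/
def primalObj (θ : V → L → ℝ) (Lab : V → Finset L) (μ : V → L → ℝ) : ℝ :=
  ∑ v, ∑ ℓ ∈ Lab v, θ v ℓ * μ v ℓ

/-- The set of optimal solutions of the primal LP of the LAP. -/
def PrimalOpt (θ : V → L → ℝ) (Lab : V → Finset L) : Set (V → L → ℝ) :=
  {μ | PrimalFeasible Lab μ ∧
    ∀ ν, PrimalFeasible Lab ν → primalObj θ Lab μ ≤ primalObj θ Lab ν}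

/-- Feasibility for the dual LP of the LAP: `α v + β ℓ ≤ θ v ℓ` on allowed pairs. -/
def DualFeasible (θ : V → L → ℝ) (Lab : V → Finset L) (p : (V → ℝ) × (L → ℝ)) : Prop :=
  ∀ v ℓ, ℓ ∈ Lab v → p.1 v + p.2 ℓ ≤ θ v ℓ

/-- Objective of the dual LP of the LAP. -/
def dualObj (p : (V → ℝ) × (L → ℝ)) : ℝ := ∑ v, p.1 v + ∑ ℓ, p.2 ℓ

/-- The set of optimal solutions of the dual LP of the LAP. -/
def DualOpt (θ : V → L → ℝ) (Lab : V → Finset L) : Set ((V → ℝ) × (L → ℝ)) :=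
  {p | DualFeasible θ Lab p ∧ ∀ q, DualFeasible θ Lab q → dualObj q ≤ dualObj p}

/-- A feasible assignment for the LAP: a bijection assigning allowed labels. -/
def FeasibleAssignment (Lab : V → Finset L) (x : V ≃ L) : Prop := ∀ v, x v ∈ Lab v

/-- Cost of an assignment. -/
def assignCost (θ : V → L → ℝ) (x : V ≃ L) : ℝ := ∑ v, θ v (x v)

/-- An optimal assignment for the LAP: feasible and cost-minimizing. -/
def OptimalAssignment (θ : V → L → ℝ) (Lab : V → Finset L) (x : V ≃ L) : Prop :=
  FeasibleAssignment Lab x ∧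
    ∀ y : V ≃ L, FeasibleAssignment Lab y → assignCost θ x ≤ assignCost θ y

/-- The pair `(v, ℓ)` is minimally assignable if some optimal assignment maps `v` to `ℓ`. -/
def MinimallyAssignable (θ : V → L → ℝ) (Lab : V → Finset L) (v : V) (ℓ : L) : Prop :=
  ∃ x : V ≃ L, OptimalAssignment θ Lab x ∧ x v = ℓ

/-- Edges of the equality subgraph for a dual solution `(α, β)`. -/
def EqEdge (θ : V → L → ℝ) (Lab : V → Finset L) (α : V → ℝ) (β : L → ℝ)
    (v : V) (ℓ : L) : Prop :=
  ℓ ∈ Lab v ∧ α v + β ℓ = θ v ℓ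

/-- `x` is a perfect matching in the bipartite graph with edges `E`. -/
def IsPerfectMatching (E : V → L → Prop) (x : V ≃ L) : Prop := ∀ v, E v (x v)

/-- The edge `{v, ℓ}` is perfectly matchable: some perfect matching uses it. -/
def PerfectlyMatchable (E : V → L → Prop) (v : V) (ℓ : L) : Prop :=
  ∃ x : V ≃ L, IsPerfectMatching E x ∧ x v = ℓ

/-- The directed graph `F_x(E)` on `V` induced by a perfect matching `x` of `E`. -/
def Fdir (E : V → L → Prop) (x : V ≃ L) (u w : V) : Prop := u ≠ w ∧ E u (x w)

end LAPDefs

/-- The directed edge `(a, b)` lies on a directed cycle of the directed graph `F`: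
there is a duplicate-free list `a :: b :: l` forming a directed path along `F`
whose last vertex has an edge back to `a`. -/
def EdgeOnDirectedCycle {α : Type*} (F : α → α → Prop) (a b : α) : Prop :=
  ∃ l : List α, (a :: b :: l).Nodup ∧ List.Chain F a (b :: l) ∧
    F ((b :: l).getLast (List.cons_ne_nil _ _)) a

/-- `S` is a strongly connected component of the directed graph `F`: nonempty, any two of
its vertices are mutually reachable, and it is maximal with this property. -/
def IsSCC {α : Type*} (F : α → α → Prop) (S : Set α) : Prop :=
  S.Nonempty ∧ (∀ u ∈ S, ∀ w ∈ S, Relation.ReflTransGen F u w) ∧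
  ∀ T : Set α, S ⊆ T → (∀ u ∈ T, ∀ w ∈ T, Relation.ReflTransGen F u w) → T = S

section IntrinsicInterior

open AffineMap

variable {E : Type*} [NormedAddCommGroup E] [NormedSpace ℝ E] {s : Set E} {x y : E}

theorem mem_openSegment_add_smul_sub {ε : ℝ} (hε : 0 < ε) :
    x ∈ openSegment ℝ y (x + ε • (x - y)) := by
  refine ⟨ε / (1 + ε), 1 / (1 + ε), by positivity, by positivity, by field_simp; ring, ?_⟩
  match_scalars
  · field_simp
    ring
  · field_simp

theorem exists_openSegment_of_mem_intrinsicInterior (hx : x ∈ intrinsicInterior ℝ s)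
    (hy : y ∈ s) : ∃ z ∈ s, x ∈ openSegment ℝ y z := by
  obtain ⟨x, hx, rfl⟩ := hx
  have : Nonempty (affineSpan ℝ s) := ⟨x⟩
  let y' : affineSpan ℝ s := ⟨y, subset_affineSpan ℝ s hy⟩
  obtain ⟨t, ht, hmem⟩ := (eventually_homothety_mem_of_mem_interior ℝ y' hx).exists_gt
  refine ⟨_, hmem, ?_⟩
  have hcoe : (homothety y' t x : E) = x + (t - 1) • ((x : E) - y) := by
    simp [homothety_apply, y']
    module
  simpa only [hcoe] using mem_openSegment_add_smul_sub (sub_pos.2 ht)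

theorem Convex.openSegment_intrinsicInterior_self_subset_intrinsicInterior (hs : Convex ℝ s)
    (hx : x ∈ intrinsicInterior ℝ s) (hy : y ∈ s) :
    openSegment ℝ x y ⊆ intrinsicInterior ℝ s := by
  rintro _ ⟨a, b, ha, hb, hab, rfl⟩
  obtain ⟨x, hx, rfl⟩ := hx
  have : Nonempty (affineSpan ℝ s) := ⟨x⟩
  let y' : affineSpan ℝ s := ⟨y, subset_affineSpan ℝ s hy⟩
  have hcoe : ∀ p : affineSpan ℝ s, (homothety y' a p : E) = a • (p : E) + b • y := by
    intro p
    simp [homothety_apply, y', show b = 1 - a by linarith]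
    module
  have hmaps : homothety y' a '' ((↑) ⁻¹' s) ⊆ (↑) ⁻¹' s := by
    rintro _ ⟨p, hp, rfl⟩
    simpa [hcoe] using hs hp hy ha.le hb.le hab
  refine ⟨homothety y' a x, interior_mono hmaps ?_, hcoe x⟩
  exact (homothety_isOpenMap y' a ha.ne').image_interior_subset _ ⟨x, hx, rfl⟩

theorem Convex.mem_intrinsicInterior_iff_forall_exists_openSegment [FiniteDimensional ℝ E]
    (hs : Convex ℝ s) :
    x ∈ intrinsicInterior ℝ s ↔ x ∈ s ∧ ∀ y ∈ s, ∃ z ∈ s, x ∈ openSegment ℝ y z := by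
  refine ⟨fun hx => ⟨intrinsicInterior_subset hx,
    fun y hy => exists_openSegment_of_mem_intrinsicInterior hx hy⟩, fun ⟨hx, hext⟩ => ?_⟩
  obtain ⟨w, hw⟩ := Set.Nonempty.intrinsicInterior hs ⟨x, hx⟩
  obtain ⟨z, hz, hxz⟩ := hext w (intrinsicInterior_subset hw)
  exact hs.openSegment_intrinsicInterior_self_subset_intrinsicInterior hw hz hxz

theorem IsMinOn.eq_of_mem_intrinsicInterior {f : E →ₗ[ℝ] ℝ} (hf : IsMinOn f s x)
    (hx : x ∈ intrinsicInterior ℝ s) (hy : y ∈ s) : f y = f x := by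
  obtain ⟨z, hz, a, b, ha, hb, hab, rfl⟩ := exists_openSegment_of_mem_intrinsicInterior hx hy
  have hfy : f (a • y + b • z) ≤ f y := hf hy
  have hfz : f (a • y + b • z) ≤ f z := hf hz
  simp only [map_add, map_smul, smul_eq_mul] at hfy hfz ⊢
  have hy' : f y = a * f y + b * f y := by rw [← add_mul, hab, one_mul]
  have hz' : f z = a * f z + b * f z := by rw [← add_mul, hab, one_mul]
  have hzy : f z ≤ f y := le_of_mul_le_mul_left (by linarith) hb
  have hyz : f y ≤ f z := le_of_mul_le_mul_left (by linarith) ha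
  rw [le_antisymm hzy hyz]
  exact hy'

theorem IsMaxOn.eq_of_mem_intrinsicInterior {f : E →ₗ[ℝ] ℝ} (hf : IsMaxOn f s x)
    (hx : x ∈ intrinsicInterior ℝ s) (hy : y ∈ s) : f y = f x := by
  simpa using IsMinOn.eq_of_mem_intrinsicInterior (f := -f) hf.neg hx hy

end IntrinsicInterior

theorem exists_pos_forall_mul_lt {ι : Type*} [Finite ι] (f g : ι → ℝ) :
    ∃ ε > 0, ∀ i, 0 < f i → ε * g i < f i := by
  have h : ∀ᶠ ε in nhds (0 : ℝ), ∀ i, 0 < f i → ε * g i < f i :=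
    Filter.eventually_all.2 fun i => (Filter.eventually_imp_distrib_left).2 fun hi =>
      ((continuous_mul_const (g i)).tendsto' 0 0 (zero_mul _)).eventually_lt_const hi
  obtain ⟨ε, hε, hpos⟩ := ((h.filter_mono nhdsWithin_le_nhds).and
    (self_mem_nhdsWithin (s := Set.Ioi 0))).exists
  exact ⟨ε, hpos, hε⟩

namespace List

variable {α : Type*} {a : α} {l : List α}

theorem exists_eq_append_cons_append_cons_of_not_nodup (h : ¬ l.Nodup) :
    ∃ l₁ a t l₂, l = l₁ ++ a :: (t ++ a :: l₂) ∧ (a :: t).Nodup := by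
  induction l with
  | nil => simp at h
  | cons b l ih =>
    by_cases hl : l.Nodup
    · have hb : b ∈ l := by_contra fun hb => h (nodup_cons.2 ⟨hb, hl⟩)
      obtain ⟨t, l₂, rfl⟩ := append_of_mem hb
      refine ⟨[], b, t, l₂, rfl, nodup_cons.2 ⟨fun hbt => ?_, hl.sublist (sublist_append_left _ _)⟩⟩
      exact (nodup_append.1 hl).2.2 b hbt b mem_cons_self rfl
    · obtain ⟨l₁, a, t, l₂, rfl, hat⟩ := ih hl
      exact ⟨b :: l₁, a, t, l₂, rfl, hat⟩

section FormPerm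

variable [DecidableEq α]

theorem map_formPerm_eq_rotate (hl : l.Nodup) : l.map l.formPerm = l.rotate 1 :=
  ext_getElem (by simp) fun i _ _ => by simp [formPerm_apply_getElem _ hl, getElem_rotate]

theorem map_formPerm_cons (hl : (a :: l).Nodup) :
    (a :: l).map (a :: l).formPerm = l ++ [a] := by
  rw [map_formPerm_eq_rotate hl, rotate_cons_succ, rotate_zero]

theorem sum_toFinset_formPerm {M : Type*} [AddCommMonoid M] (f : α → α → M)
    (hl : (a :: l).Nodup) :
    ∑ v ∈ (a :: l).toFinset, f v ((a :: l).formPerm v) = (zipWith f (a :: l) (l ++ [a])).sum := by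
  rw [sum_toFinset _ hl, ← map_formPerm_cons hl, zipWith_map_right, zipWith_self]

theorem isChain_cons_append_singleton_iff_formPerm (R : α → α → Prop)
    (hl : (a :: l).Nodup) :
    (a :: l ++ [a]).IsChain R ↔ ∀ v ∈ a :: l, R v ((a :: l).formPerm v) := by
  rw [isChain_cons_append_singleton_iff_forall₂, ← map_formPerm_cons hl, forall₂_map_right_iff,
    forall₂_same]

end FormPerm

end List

section Potential

open List

variable {V : Type*} (c : V → V → ℝ)

def walkCost : List V → ℝ
  | [] => 0
  | [_] => 0
  | a :: b :: l => c a b + walkCost (b :: l)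

theorem walkCost_append_cons (l₁ : List V) (a : V) (l₂ : List V) :
    walkCost c (l₁ ++ a :: l₂) = walkCost c (l₁ ++ [a]) + walkCost c (a :: l₂) := by
  induction l₁ with
  | nil => simp [walkCost]
  | cons b l₁ ih =>
    cases l₁ with
    | nil => simp [walkCost]
    | cons b' l₁ => simp only [cons_append, walkCost] at ih ⊢; rw [ih, add_assoc]

theorem walkCost_append_singleton {l : List V} {v : V} (hl : l.getLast? = some v) (u : V) :
    walkCost c (l ++ [u]) = walkCost c l + c v u := by
  obtain ⟨l₀, rfl⟩ := List.getLast?_eq_some_iff.1 hl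
  rw [append_assoc, singleton_append, walkCost_append_cons]
  simp [walkCost]

theorem walkCost_cons_append_singleton (a b : V) (l : List V) :
    walkCost c (a :: l ++ [b]) = (zipWith c (a :: l) (l ++ [b])).sum := by
  induction l generalizing a with
  | nil => simp [walkCost]
  | cons a' l ih =>
    simp only [cons_append, walkCost, zipWith_cons_cons, List.sum_cons] at ih ⊢
    rw [ih]

variable {c}

/-- A cycle is encoded as a closed walk `a :: l ++ [a]` with `a :: l` duplicate free. -/
def NoNegativeCycle (E : V → V → Prop) (c : V → V → ℝ) : Prop :=
  ∀ a l, (a :: l).Nodup → (a :: l ++ [a]).IsChain E → 0 ≤ walkCost c (a :: l ++ [a])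

variable {E : V → V → Prop}

theorem NoNegativeCycle.exists_nodup_walkCost_le (hc : NoNegativeCycle E c) (l : List V)
    (hl : l.IsChain E) :
    ∃ l', l'.Nodup ∧ l'.IsChain E ∧ l'.getLast? = l.getLast? ∧ walkCost c l' ≤ walkCost c l := by
  by_cases hnd : l.Nodup
  · exact ⟨l, hnd, hl, rfl, le_rfl⟩
  -- cut out the first cycle `a :: t ++ [a]` of the walk; it costs at least `0`
  obtain ⟨l₁, a, t, l₂, rfl, hat⟩ := exists_eq_append_cons_append_cons_of_not_nodup hnd
  obtain ⟨hl₁, hl₂⟩ := isChain_split.1 hl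
  rw [← cons_append, isChain_split] at hl₂
  obtain ⟨hcyc, hl₂⟩ := hl₂
  obtain ⟨l', hnd', hl', hlast, hcost⟩ :=
    hc.exists_nodup_walkCost_le (l₁ ++ a :: l₂) (isChain_split.2 ⟨hl₁, hl₂⟩)
  refine ⟨l', hnd', hl', by
    rw [hlast, ← cons_append, ← append_assoc, getLast?_append_cons, getLast?_append_cons], ?_⟩
  have := hc a t hat hcyc
  rw [walkCost_append_cons] at hcost
  rw [walkCost_append_cons, ← cons_append, walkCost_append_cons c (a :: t)]
  linarith
termination_by l.length

theorem NoNegativeCycle.exists_potential [Finite V]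
    (hc : NoNegativeCycle E c) : ∃ π : V → ℝ, ∀ v u, E v u → π u ≤ π v + c v u := by
  have := Fintype.ofFinite V
  classical
  have hnodup : {l : List V | l.Nodup}.Finite :=
    Set.finite_coe_iff.1 (Finite.of_fintype {l : List V // l.Nodup})
  have hmin (v : V) := Set.exists_min_image
    {l : List V | l.Nodup ∧ l.IsChain E ∧ l.getLast? = some v} (walkCost c)
    (hnodup.subset fun _ hl => hl.1) ⟨[v], by simp⟩
  choose w hw hmin using hmin
  refine ⟨fun v => walkCost c (w v), fun v u hvu => ?_⟩
  obtain ⟨-, hch, hlast⟩ := hw v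
  obtain ⟨l', hnd', hch', hlast', hle⟩ := hc.exists_nodup_walkCost_le (w v ++ [u])
    (hch.append (isChain_singleton u) (by simp [hlast, hvu]))
  calc walkCost c (w u) ≤ walkCost c l' := hmin u l' ⟨hnd', hch', by simp [hlast']⟩
    _ ≤ walkCost c (w v ++ [u]) := hle
    _ = walkCost c (w v) + c v u := walkCost_append_singleton c hlast u

end Potential

section Duality

variable {V L : Type*} [Fintype V] [Fintype L] [DecidableEq L]
  {θ : V → L → ℝ} {Lab : V → Finset L} {μ : V → L → ℝ} {p : (V → ℝ) × (L → ℝ)}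

theorem primalObj_sub_dualObj (hμ : PrimalFeasible Lab μ) (p : (V → ℝ) × (L → ℝ)) :
    primalObj θ Lab μ - dualObj p =
      ∑ v, ∑ ℓ ∈ Lab v, μ v ℓ * (θ v ℓ - (p.1 v + p.2 ℓ)) := by
  obtain ⟨-, -, hrow, hcol⟩ := hμ
  have hα : ∑ v, p.1 v = ∑ v, ∑ ℓ ∈ Lab v, μ v ℓ * p.1 v := by
    simp_rw [← Finset.sum_mul, hrow, one_mul]
  have hβ : ∑ ℓ, p.2 ℓ = ∑ v, ∑ ℓ ∈ Lab v, μ v ℓ * p.2 ℓ := by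
    rw [Finset.sum_comm' (t' := univ) (s' := fun ℓ => univ.filter fun v => ℓ ∈ Lab v) (by simp)]
    simp_rw [← Finset.sum_mul, hcol, one_mul]
  rw [dualObj, primalObj, hα, hβ, ← Finset.sum_add_distrib, ← Finset.sum_sub_distrib]
  refine Finset.sum_congr rfl fun v _ => ?_
  rw [← Finset.sum_add_distrib, ← Finset.sum_sub_distrib]
  exact Finset.sum_congr rfl fun ℓ _ => by ring

theorem dualObj_le_primalObj (hμ : PrimalFeasible Lab μ) (hp : DualFeasible θ Lab p) :
    dualObj p ≤ primalObj θ Lab μ := by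
  rw [← sub_nonneg, primalObj_sub_dualObj hμ]
  exact Finset.sum_nonneg fun v _ => Finset.sum_nonneg fun ℓ hℓ =>
    mul_nonneg (hμ.1 v ℓ hℓ) (sub_nonneg.2 (hp v ℓ hℓ))

theorem primalObj_eq_dualObj_iff (hμ : PrimalFeasible Lab μ) (hp : DualFeasible θ Lab p) :
    primalObj θ Lab μ = dualObj p ↔
      ∀ v ℓ, ℓ ∈ Lab v → 0 < μ v ℓ → p.1 v + p.2 ℓ = θ v ℓ := by
  have hterm : ∀ v ℓ, ℓ ∈ Lab v → 0 ≤ μ v ℓ * (θ v ℓ - (p.1 v + p.2 ℓ)) := fun v ℓ hℓ =>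
    mul_nonneg (hμ.1 v ℓ hℓ) (sub_nonneg.2 (hp v ℓ hℓ))
  rw [← sub_eq_zero, primalObj_sub_dualObj hμ, Finset.sum_eq_zero_iff_of_nonneg fun v _ =>
    Finset.sum_nonneg (hterm v)]
  simp only [Finset.mem_univ, true_imp_iff]
  refine forall_congr' fun v => ?_
  rw [Finset.sum_eq_zero_iff_of_nonneg (hterm v)]
  refine forall₂_congr fun ℓ hℓ => ?_
  rw [mul_eq_zero, sub_eq_zero, (hμ.1 v ℓ hℓ).lt_iff_ne', ne_eq, eq_comm (a := θ v ℓ)]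
  tauto

end Duality

section PrimalPolytope

variable {V L : Type*} [Fintype V] [DecidableEq L]
  {θ : V → L → ℝ} {Lab : V → Finset L} {μ ν : V → L → ℝ}

def assignmentIndicator (x : V ≃ L) : V → L → ℝ := fun v ℓ => if x v = ℓ then 1 else 0

theorem primalFeasible_assignmentIndicator {x : V ≃ L} (hx : FeasibleAssignment Lab x) :
    PrimalFeasible Lab (assignmentIndicator x) := by
  refine ⟨fun v ℓ _ => ?_, fun v ℓ hℓ => ?_, fun v => ?_, fun ℓ => ?_⟩
  · unfold assignmentIndicator; split_ifs <;> norm_num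
  · exact if_neg fun h : x v = ℓ => hℓ (h ▸ hx v)
  · simp [assignmentIndicator, hx v]
  · have hmem : x.symm ℓ ∈ univ.filter fun v => ℓ ∈ Lab v := by simpa using hx (x.symm ℓ)
    rw [Finset.sum_eq_single_of_mem (x.symm ℓ) hmem fun v _ hv => ?_]
    · simp [assignmentIndicator]
    · exact if_neg fun h => hv (x.eq_symm_apply.2 h)

theorem primalObj_assignmentIndicator {x : V ≃ L} (hx : FeasibleAssignment Lab x) :
    primalObj θ Lab (assignmentIndicator x) = assignCost θ x :=
  Finset.sum_congr rfl fun v _ => by simp [assignmentIndicator, hx v]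

theorem smul_add_smul_mem_primalOpt (hμ : μ ∈ PrimalOpt θ Lab) (hν : ν ∈ PrimalOpt θ Lab)
    {a b : ℝ} (hab : a + b = 1) (hnonneg : ∀ v ℓ, ℓ ∈ Lab v → 0 ≤ a * μ v ℓ + b * ν v ℓ) :
    a • μ + b • ν ∈ PrimalOpt θ Lab := by
  have hobj : primalObj θ Lab (a • μ + b • ν) = primalObj θ Lab μ := by
    have hlin : primalObj θ Lab (a • μ + b • ν) =
        a * primalObj θ Lab μ + b * primalObj θ Lab ν := by
      simp only [primalObj, Pi.add_apply, Pi.smul_apply, smul_eq_mul, Finset.mul_sum,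
        ← Finset.sum_add_distrib]
      exact Finset.sum_congr rfl fun v _ => Finset.sum_congr rfl fun ℓ _ => by ring
    rw [hlin, le_antisymm (hν.2 μ hμ.1) (hμ.2 ν hν.1), ← add_mul, hab, one_mul]
  obtain ⟨⟨-, hμ0, hμrow, hμcol⟩, hμmin⟩ := hμ
  obtain ⟨⟨-, hν0, hνrow, hνcol⟩, -⟩ := hν
  refine ⟨⟨hnonneg, fun v ℓ hℓ => by simp [hμ0 v ℓ hℓ, hν0 v ℓ hℓ], fun v => ?_, fun ℓ => ?_⟩,
    fun ρ hρ => ?_⟩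
  · simp [Finset.sum_add_distrib, ← Finset.mul_sum, hμrow v, hνrow v, hab]
  · simp [Finset.sum_add_distrib, ← Finset.mul_sum, hμcol ℓ, hνcol ℓ, hab]
  · exact hobj ▸ hμmin ρ hρ

theorem convex_primalOpt : Convex ℝ (PrimalOpt θ Lab) :=
  fun _ hμ _ hν _ _ ha hb hab => smul_add_smul_mem_primalOpt hμ hν hab fun v ℓ hℓ =>
    add_nonneg (mul_nonneg ha (hμ.1.1 v ℓ hℓ)) (mul_nonneg hb (hν.1.1 v ℓ hℓ))

end PrimalPolytope

section DualPolyhedron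

variable {V L : Type*} [Fintype V] [Fintype L]
  {θ : V → L → ℝ} {Lab : V → Finset L} {p q : (V → ℝ) × (L → ℝ)}

theorem smul_add_smul_mem_dualOpt (hp : p ∈ DualOpt θ Lab) (hq : q ∈ DualOpt θ Lab)
    {a b : ℝ} (hab : a + b = 1)
    (hfeas : ∀ v ℓ, ℓ ∈ Lab v → a * (p.1 v + p.2 ℓ) + b * (q.1 v + q.2 ℓ) ≤ θ v ℓ) :
    a • p + b • q ∈ DualOpt θ Lab := by
  have hobj : dualObj (a • p + b • q) = dualObj p := by
    have hlin : dualObj (a • p + b • q) = a * dualObj p + b * dualObj q := by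
      simp only [dualObj, Prod.fst_add, Prod.snd_add, Prod.smul_fst, Prod.smul_snd,
        Pi.add_apply, Pi.smul_apply, smul_eq_mul, Finset.sum_add_distrib, ← Finset.mul_sum]
      ring
    rw [hlin, le_antisymm (hp.2 q hq.1) (hq.2 p hp.1), ← add_mul, hab, one_mul]
  refine ⟨fun v ℓ hℓ => ?_, fun r hr => hobj ▸ hp.2 r hr⟩
  simpa [mul_add, add_add_add_comm] using hfeas v ℓ hℓ

theorem convex_dualOpt : Convex ℝ (DualOpt θ Lab) :=
  fun p hp q hq a b ha hb hab => smul_add_smul_mem_dualOpt hp hq hab fun v ℓ hℓ => by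
    linarith [mul_le_mul_of_nonneg_left (hp.1 v ℓ hℓ) ha,
      mul_le_mul_of_nonneg_left (hq.1 v ℓ hℓ) hb,
      show a * θ v ℓ + b * θ v ℓ = θ v ℓ by rw [← add_mul, hab, one_mul]]

end DualPolyhedron

section StrongDuality

variable {V L : Type*} [Fintype V] {θ : V → L → ℝ} {Lab : V → Finset L} {x : V ≃ L}

theorem exists_optimalAssignment (hfeas : ∃ x : V ≃ L, FeasibleAssignment Lab x) :
    ∃ x : V ≃ L, OptimalAssignment θ Lab x := by
  obtain ⟨x₀, hx₀⟩ := hfeas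
  obtain ⟨x, hx, hmin⟩ := Set.exists_min_image {x : V ≃ L | FeasibleAssignment Lab x}
    (assignCost θ) (Set.toFinite _) ⟨x₀, hx₀⟩
  exact ⟨x, hx, hmin⟩

theorem OptimalAssignment.noNegativeCycle (hx : OptimalAssignment θ Lab x) :
    NoNegativeCycle (fun v u => x u ∈ Lab v) (fun v u => θ v (x u) - θ v (x v)) := by
  classical
  intro a l hnd hch
  -- moving each vertex of the cycle to the label of its successor is a feasible assignment whose
  -- extra cost is the cost of the cycle
  have hedge := (List.isChain_cons_append_singleton_iff_formPerm _ hnd).1 hch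
  have hfix : ∀ v ∉ a :: l, (a :: l).formPerm v = v := fun v hv => List.formPerm_apply_of_notMem hv
  have hy : FeasibleAssignment Lab ((a :: l).formPerm.trans x) := fun v => by
    by_cases hv : v ∈ a :: l
    · exact hedge v hv
    · simpa [hfix v hv] using hx.1 v
  rw [walkCost_cons_append_singleton, ← List.sum_toFinset_formPerm _ hnd,
    Finset.sum_subset (Finset.subset_univ _) fun v _ hv => by
      simp only [hfix v (by rwa [List.mem_toFinset] at hv), sub_self],
    Finset.sum_sub_distrib, sub_nonneg]
  exact hx.2 _ hy

theorem OptimalAssignment.exists_dualFeasible_dualObj_eq [Fintype L]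
    (hx : OptimalAssignment θ Lab x) :
    ∃ p, DualFeasible θ Lab p ∧ dualObj p = assignCost θ x := by
  obtain ⟨π, hπ⟩ := hx.noNegativeCycle.exists_potential
  refine ⟨(fun v => θ v (x v) - π v, fun ℓ => π (x.symm ℓ)), fun v ℓ hℓ => ?_, ?_⟩
  · have := hπ v (x.symm ℓ) (by simpa using hℓ)
    dsimp only
    simp only [Equiv.apply_symm_apply] at this
    linarith
  · simp only [dualObj, Finset.sum_sub_distrib, Equiv.sum_comp x.symm π, assignCost]
    ring

end StrongDuality

section OptimalSets

variable {V L : Type*} [Fintype V] [Fintype L] [DecidableEq L]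
  {θ : V → L → ℝ} {Lab : V → Finset L} {μ : V → L → ℝ} {p : (V → ℝ) × (L → ℝ)}

theorem mem_primalOpt_and_mem_dualOpt_iff (hfeas : ∃ x : V ≃ L, FeasibleAssignment Lab x)
    (hμ : PrimalFeasible Lab μ) (hp : DualFeasible θ Lab p) :
    μ ∈ PrimalOpt θ Lab ∧ p ∈ DualOpt θ Lab ↔ primalObj θ Lab μ = dualObj p := by
  refine ⟨fun ⟨hμo, hpo⟩ => ?_, fun h => ⟨⟨hμ, fun ν hν => h ▸ dualObj_le_primalObj hν hp⟩,
    ⟨hp, fun q hq => h ▸ dualObj_le_primalObj hμ hq⟩⟩⟩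
  obtain ⟨x, hx⟩ := exists_optimalAssignment (θ := θ) hfeas
  obtain ⟨q, hq, hqx⟩ := hx.exists_dualFeasible_dualObj_eq
  have h₁ := hμo.2 _ (primalFeasible_assignmentIndicator hx.1)
  rw [primalObj_assignmentIndicator hx.1, ← hqx] at h₁
  linarith [hpo.2 q hq, dualObj_le_primalObj hμ hp]

theorem mem_primalOpt_and_mem_dualOpt_iff_complementary
    (hfeas : ∃ x : V ≃ L, FeasibleAssignment Lab x)
    (hμ : PrimalFeasible Lab μ) (hp : DualFeasible θ Lab p) :
    μ ∈ PrimalOpt θ Lab ∧ p ∈ DualOpt θ Lab ↔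
      ∀ v ℓ, ℓ ∈ Lab v → 0 < μ v ℓ → p.1 v + p.2 ℓ = θ v ℓ :=
  (mem_primalOpt_and_mem_dualOpt_iff hfeas hμ hp).trans (primalObj_eq_dualObj_iff hμ hp)

theorem OptimalAssignment.assignmentIndicator_mem_primalOpt {x : V ≃ L}
    (hx : OptimalAssignment θ Lab x) : assignmentIndicator x ∈ PrimalOpt θ Lab := by
  obtain ⟨p, hp, hpx⟩ := hx.exists_dualFeasible_dualObj_eq
  refine ((mem_primalOpt_and_mem_dualOpt_iff ⟨x, hx.1⟩ (primalFeasible_assignmentIndicator hx.1)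
    hp).2 ?_).1
  rw [primalObj_assignmentIndicator hx.1, hpx]

theorem exists_mem_dualOpt_lt_of_not_minimallyAssignable
    (hfeas : ∃ x : V ≃ L, FeasibleAssignment Lab x) {v₀ : V} {ℓ₀ : L} (hℓ₀ : ℓ₀ ∈ Lab v₀)
    (h : ¬ MinimallyAssignable θ Lab v₀ ℓ₀) : ∃ p ∈ DualOpt θ Lab, p.1 v₀ + p.2 ℓ₀ < θ v₀ ℓ₀ := by
  classical
  obtain ⟨x, hx⟩ := exists_optimalAssignment (θ := θ) hfeas
  have hxv : x v₀ ≠ ℓ₀ := fun hxv => h ⟨x, hx, hxv⟩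
  have hgap : ∀ y, FeasibleAssignment Lab y → y v₀ = ℓ₀ → assignCost θ x < assignCost θ y :=
    fun y hy hyv => (hx.2 y hy).lt_of_ne fun heq => h ⟨y, ⟨hy, fun z hz => heq ▸ hx.2 z hz⟩, hyv⟩
  obtain ⟨δ, hδ, hδlt⟩ := exists_pos_forall_mul_lt (fun y => assignCost θ y - assignCost θ x) 1
  -- lowering the cost of the pair `(v₀, ℓ₀)` by `δ` keeps `x` optimal
  let θ' : V → L → ℝ := fun v ℓ => θ v ℓ - if v = v₀ ∧ ℓ = ℓ₀ then δ else 0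
  have hcost (y : V ≃ L) : assignCost θ' y = assignCost θ y - if y v₀ = ℓ₀ then δ else 0 := by
    simp only [assignCost, θ', Finset.sum_sub_distrib, ite_and, Finset.sum_ite_eq',
      Finset.mem_univ, if_true]
  have hx' : OptimalAssignment θ' Lab x := by
    refine ⟨hx.1, fun y hy => ?_⟩
    rw [hcost, hcost, if_neg hxv]
    split_ifs with hyv
    · have := hδlt y (sub_pos.2 (hgap y hy hyv))
      simp only [Pi.one_apply, mul_one] at this
      linarith
    · linarith [hx.2 y hy]
  obtain ⟨p, hp, hpx⟩ := hx'.exists_dualFeasible_dualObj_eq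
  have hpθ : DualFeasible θ Lab p := fun v ℓ hℓ =>
    (hp v ℓ hℓ).trans (by simp only [θ']; split_ifs <;> linarith)
  refine ⟨p, ((mem_primalOpt_and_mem_dualOpt_iff hfeas (primalFeasible_assignmentIndicator hx.1)
    hpθ).2 ?_).2, ?_⟩
  · rw [primalObj_assignmentIndicator hx.1, hpx, hcost, if_neg hxv, sub_zero]
  · have := hp v₀ ℓ₀ hℓ₀
    simp only [θ', and_self, if_true] at this
    linarith

theorem minimallyAssignable_of_forall_mem_dualOpt
    (hfeas : ∃ x : V ≃ L, FeasibleAssignment Lab x) {v : V} {ℓ : L} (hℓ : ℓ ∈ Lab v)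
    (h : ∀ p ∈ DualOpt θ Lab, p.1 v + p.2 ℓ = θ v ℓ) : MinimallyAssignable θ Lab v ℓ := by
  by_contra hnot
  obtain ⟨p, hp, hlt⟩ := exists_mem_dualOpt_lt_of_not_minimallyAssignable hfeas hℓ hnot
  exact hlt.ne (h p hp)

def StrictlyComplementary (θ : V → L → ℝ) (Lab : V → Finset L) (μ : V → L → ℝ)
    (p : (V → ℝ) × (L → ℝ)) : Prop :=
  ∀ v ℓ, ℓ ∈ Lab v → (0 < μ v ℓ ↔ p.1 v + p.2 ℓ = θ v ℓ)

theorem strictlyComplementary_of_mem_intrinsicInterior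
    (hfeas : ∃ x : V ≃ L, FeasibleAssignment Lab x)
    (hμ : μ ∈ intrinsicInterior ℝ (PrimalOpt θ Lab))
    (hp : p ∈ intrinsicInterior ℝ (DualOpt θ Lab)) : StrictlyComplementary θ Lab μ p := by
  have hμo := intrinsicInterior_subset hμ
  have hpo := intrinsicInterior_subset hp
  have hcs := (mem_primalOpt_and_mem_dualOpt_iff_complementary hfeas hμo.1 hpo.1).1 ⟨hμo, hpo⟩
  intro v ℓ hℓ
  refine ⟨hcs v ℓ hℓ, fun htight => ?_⟩
  let f : (V → ℝ) × (L → ℝ) →ₗ[ℝ] ℝ :=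
    (LinearMap.proj v : (V → ℝ) →ₗ[ℝ] ℝ) ∘ₗ LinearMap.fst ℝ (V → ℝ) (L → ℝ) +
      (LinearMap.proj ℓ : (L → ℝ) →ₗ[ℝ] ℝ) ∘ₗ LinearMap.snd ℝ (V → ℝ) (L → ℝ)
  have hall : ∀ q ∈ DualOpt θ Lab, q.1 v + q.2 ℓ = θ v ℓ := fun q hq =>
    (IsMaxOn.eq_of_mem_intrinsicInterior (f := f)
      (fun q hq => by simpa [f, htight] using hq.1 v ℓ hℓ) hp hq).trans htight
  obtain ⟨y, hy, hyv⟩ := minimallyAssignable_of_forall_mem_dualOpt hfeas hℓ hall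
  by_contra hpos
  have hzero : μ v ℓ = 0 := le_antisymm (not_lt.1 hpos) (hμo.1.1 v ℓ hℓ)
  let g : (V → L → ℝ) →ₗ[ℝ] ℝ :=
    (LinearMap.proj ℓ : (L → ℝ) →ₗ[ℝ] ℝ) ∘ₗ (LinearMap.proj v : (V → L → ℝ) →ₗ[ℝ] L → ℝ)
  have := IsMinOn.eq_of_mem_intrinsicInterior (f := g)
    (fun ν hν => by simpa [g, hzero] using hν.1.1 v ℓ hℓ) hμ hy.assignmentIndicator_mem_primalOpt
  simp [g, hzero, assignmentIndicator, hyv] at this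

theorem StrictlyComplementary.mem_primalOpt_and_mem_dualOpt
    (hfeas : ∃ x : V ≃ L, FeasibleAssignment Lab x) (hμ : PrimalFeasible Lab μ)
    (hp : DualFeasible θ Lab p) (h : StrictlyComplementary θ Lab μ p) :
    μ ∈ PrimalOpt θ Lab ∧ p ∈ DualOpt θ Lab :=
  (mem_primalOpt_and_mem_dualOpt_iff_complementary hfeas hμ hp).2 fun v ℓ hℓ => (h v ℓ hℓ).1

theorem StrictlyComplementary.mem_intrinsicInterior_primalOpt
    (hfeas : ∃ x : V ≃ L, FeasibleAssignment Lab x) (hμ : PrimalFeasible Lab μ)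
    (hp : DualFeasible θ Lab p) (h : StrictlyComplementary θ Lab μ p) :
    μ ∈ intrinsicInterior ℝ (PrimalOpt θ Lab) := by
  have hopt := h.mem_primalOpt_and_mem_dualOpt hfeas hμ hp
  refine convex_primalOpt.mem_intrinsicInterior_iff_forall_exists_openSegment.2
    ⟨hopt.1, fun ν hν => ?_⟩
  have hνcs := (mem_primalOpt_and_mem_dualOpt_iff_complementary hfeas hν.1 hp).1 ⟨hν, hopt.2⟩
  obtain ⟨ε, hε, hsmall⟩ :=
    exists_pos_forall_mul_lt (fun i : V × L => μ i.1 i.2) (fun i => ν i.1 i.2 - μ i.1 i.2)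
  refine ⟨(1 + ε) • μ + (-ε) • ν, smul_add_smul_mem_primalOpt hopt.1 hν (by ring)
    fun v ℓ hℓ => ?_, ?_⟩
  · rcases (hμ.1 v ℓ hℓ).lt_or_eq with hpos | hzero
    · linarith [hsmall (v, ℓ) hpos]
    -- where `μ` vanishes, so does `ν`, by complementary slackness
    · have hν0 : ν v ℓ = 0 := ((hν.1.1 v ℓ hℓ).eq_of_not_lt fun hνpos =>
        hzero.not_lt ((h v ℓ hℓ).2 (hνcs v ℓ hℓ hνpos))).symm
      rw [← hzero, hν0]
      simp
  · convert mem_openSegment_add_smul_sub (x := μ) (y := ν) hε using 2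
    module

theorem StrictlyComplementary.mem_intrinsicInterior_dualOpt
    (hfeas : ∃ x : V ≃ L, FeasibleAssignment Lab x) (hμ : PrimalFeasible Lab μ)
    (hp : DualFeasible θ Lab p) (h : StrictlyComplementary θ Lab μ p) :
    p ∈ intrinsicInterior ℝ (DualOpt θ Lab) := by
  have hopt := h.mem_primalOpt_and_mem_dualOpt hfeas hμ hp
  refine convex_dualOpt.mem_intrinsicInterior_iff_forall_exists_openSegment.2
    ⟨hopt.2, fun q hq => ?_⟩
  have hqcs := (mem_primalOpt_and_mem_dualOpt_iff_complementary hfeas hμ hq.1).1 ⟨hopt.1, hq⟩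
  obtain ⟨ε, hε, hsmall⟩ := exists_pos_forall_mul_lt
    (fun i : V × L => θ i.1 i.2 - (p.1 i.1 + p.2 i.2))
    (fun i => (p.1 i.1 + p.2 i.2) - (q.1 i.1 + q.2 i.2))
  refine ⟨(1 + ε) • p + (-ε) • q, smul_add_smul_mem_dualOpt hopt.2 hq (by ring)
    fun v ℓ hℓ => ?_, ?_⟩
  · rcases (sub_nonneg.2 (hp v ℓ hℓ)).lt_or_eq with hslack | htight
    · linarith [hsmall (v, ℓ) hslack]
    -- where `p` is tight, `μ` is positive, so `q` is tight as well
    · have hp' : p.1 v + p.2 ℓ = θ v ℓ := by linarith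
      rw [hp', hqcs v ℓ hℓ ((h v ℓ hℓ).2 hp'), ← add_mul]
      simp
  · convert mem_openSegment_add_smul_sub (x := p) (y := q) hε using 2
    module

end OptimalSets

theorem statement0_general {V L : Type*} [Fintype V] [Fintype L] [DecidableEq L]
    (θ : V → L → ℝ) (Lab : V → Finset L)
    (hfeas : ∃ x : V ≃ L, FeasibleAssignment Lab x)
    (μ : V → L → ℝ) (α : V → ℝ) (β : L → ℝ)
    (hμ : PrimalFeasible Lab μ) (hαβ : DualFeasible θ Lab (α, β)) :
    (μ ∈ intrinsicInterior ℝ (PrimalOpt θ Lab) ∧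
        (α, β) ∈ intrinsicInterior ℝ (DualOpt θ Lab)) ↔
      ∀ v ℓ, ℓ ∈ Lab v → (0 < μ v ℓ ↔ α v + β ℓ = θ v ℓ) :=
  ⟨fun ⟨hμ', hαβ'⟩ => strictlyComplementary_of_mem_intrinsicInterior hfeas hμ' hαβ',
    fun h => ⟨StrictlyComplementary.mem_intrinsicInterior_primalOpt hfeas hμ hαβ h,
      StrictlyComplementary.mem_intrinsicInterior_dualOpt hfeas hμ hαβ h⟩⟩

/-- Strict complementary slackness for the LAP (Theorem 1): a primal-feasible `μ` and a
dual-feasible `(α, β)` both lie in the relative interiors of the respective optimal sets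
iff `μ v ℓ > 0 ↔ α v + β ℓ = θ v ℓ` for every allowed pair. -/
theorem statement0 {V L : Type*} [Fintype V] [Fintype L] [DecidableEq V] [DecidableEq L]
    (θ : V → L → ℝ) (Lab : V → Finset L)
    (hfeas : ∃ x : V ≃ L, FeasibleAssignment Lab x)
    (μ : V → L → ℝ) (α : V → ℝ) (β : L → ℝ)
    (hμ : PrimalFeasible Lab μ) (hαβ : DualFeasible θ Lab (α, β)) :
    (μ ∈ intrinsicInterior ℝ (PrimalOpt θ Lab) ∧
        (α, β) ∈ intrinsicInterior ℝ (DualOpt θ Lab)) ↔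
      ∀ v ℓ, ℓ ∈ Lab v → (0 < μ v ℓ ↔ α v + β ℓ = θ v ℓ) :=
  statement0_general θ Lab hfeas μ α β hμ hαβ
end

section
/- Let (α, β) be optimal for the dual LP of the LAP. Then for all v ∈ V and ℓ ∈ L_v, the pair (v, ℓ) is minimally assignable if and only if the edge {v, ℓ} is perfectly matchable in the equality subgraph (V ∪ L, E(α,β)). -/
/-!
Weak duality bounds the cost of every feasible assignment below by `∑ α + ∑ β`, with equality
exactly for perfect matchings of the equality subgraph. Such a matching exists when `(α, β)` is
dual optimal: if a set `s ⊆ V` had fewer equality neighbours `N` than elements, raising `α` by a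
small `ε` on `s` and lowering `β` by `ε` on `N` would keep `(α, β)` feasible and gain
`(|s| - |N|) ε > 0`, so Hall's condition holds. Hence the optimal assignments are exactly the
perfect matchings of the equality subgraph.
-/

open Finset

theorem Finset.exists_pos_le_of_forall_pos {ι : Type*} (D : Finset ι) (g : ι → ℝ)
    (hg : ∀ p ∈ D, 0 < g p) : ∃ ε > 0, ∀ p ∈ D, ε ≤ g p := by
  rcases D.eq_empty_or_nonempty with rfl | hD
  · exact ⟨1, one_pos, by simp⟩
  · obtain ⟨p, hp, hmin⟩ := D.exists_min_image g hD
    exact ⟨g p, hg p hp, hmin⟩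

namespace LAP

variable {V L : Type*} {θ : V → L → ℝ} {Lab : V → Finset L} {α : V → ℝ} {β : L → ℝ}

theorem feasibleAssignment_of_isPerfectMatching {z : V ≃ L}
    (hz : IsPerfectMatching (EqEdge θ Lab α β) z) : FeasibleAssignment Lab z :=
  fun v => (hz v).1

open Classical in
noncomputable def eqNeighbors (θ : V → L → ℝ) (Lab : V → Finset L) (α : V → ℝ) (β : L → ℝ)
    (v : V) : Finset L :=
  (Lab v).filter fun ℓ => α v + β ℓ = θ v ℓ

theorem mem_eqNeighbors {v : V} {ℓ : L} :
    ℓ ∈ eqNeighbors θ Lab α β v ↔ EqEdge θ Lab α β v ℓ := by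
  simp [eqNeighbors, EqEdge]

section DualShift

variable [DecidableEq V] [DecidableEq L] (s : Finset V) (N : Finset L) (ε : ℝ)

def dualShift (α : V → ℝ) (β : L → ℝ) : (V → ℝ) × (L → ℝ) :=
  (fun v => α v + if v ∈ s then ε else 0, fun ℓ => β ℓ - if ℓ ∈ N then ε else 0)

theorem dualFeasible_dualShift (hαβ : DualFeasible θ Lab (α, β)) (hε : 0 ≤ ε)
    (hslack : ∀ v ∈ s, ∀ ℓ ∈ Lab v, ℓ ∉ N → α v + β ℓ + ε ≤ θ v ℓ) :
    DualFeasible θ Lab (dualShift s N ε α β) := by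
  intro v ℓ hℓ
  have := hαβ v ℓ hℓ
  simp only [dualShift]
  by_cases hv : v ∈ s <;> by_cases hN : ℓ ∈ N <;> simp only [hv, hN, if_true, if_false]
  · linarith
  · linarith [hslack v hv ℓ hℓ hN]
  · linarith
  · linarith

theorem dualObj_dualShift [Fintype V] [Fintype L] :
    dualObj (dualShift s N ε α β) = dualObj (α, β) + ((#s : ℝ) - #N) * ε := by
  simp only [dualObj, dualShift, sum_add_distrib, sum_sub_distrib, sum_ite_mem, univ_inter,
    sum_const, nsmul_eq_mul]
  ring

end DualShift

variable [Fintype V] [Fintype L]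

theorem sum_add_sum_le_assignCost (hαβ : DualFeasible θ Lab (α, β)) {z : V ≃ L}
    (hz : FeasibleAssignment Lab z) : ∑ v, α v + ∑ ℓ, β ℓ ≤ assignCost θ z :=
  calc ∑ v, α v + ∑ ℓ, β ℓ = ∑ v, (α v + β (z v)) := by
        rw [sum_add_distrib, Equiv.sum_comp z β]
    _ ≤ assignCost θ z := sum_le_sum fun v _ => hαβ v (z v) (hz v)

theorem assignCost_eq_of_isPerfectMatching {z : V ≃ L}
    (hz : IsPerfectMatching (EqEdge θ Lab α β) z) :
    assignCost θ z = ∑ v, α v + ∑ ℓ, β ℓ := by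
  rw [assignCost, ← Equiv.sum_comp z β, ← sum_add_distrib]
  exact sum_congr rfl fun v _ => (hz v).2.symm

theorem optimalAssignment_of_isPerfectMatching (hαβ : DualFeasible θ Lab (α, β)) {x : V ≃ L}
    (hx : IsPerfectMatching (EqEdge θ Lab α β) x) : OptimalAssignment θ Lab x :=
  ⟨feasibleAssignment_of_isPerfectMatching hx, fun _ hz =>
    (assignCost_eq_of_isPerfectMatching hx).trans_le (sum_add_sum_le_assignCost hαβ hz)⟩

theorem isPerfectMatching_of_assignCost_le (hαβ : DualFeasible θ Lab (α, β)) {x : V ≃ L}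
    (hx : FeasibleAssignment Lab x) (hcost : assignCost θ x ≤ ∑ v, α v + ∑ ℓ, β ℓ) :
    IsPerfectMatching (EqEdge θ Lab α β) x := by
  have hslack : ∀ v ∈ univ, 0 ≤ θ v (x v) - (α v + β (x v)) := fun v _ =>
    sub_nonneg.2 (hαβ v (x v) (hx v))
  have hsum : ∑ v, (θ v (x v) - (α v + β (x v))) = 0 := by
    refine le_antisymm ?_ (sum_nonneg hslack)
    rw [sum_sub_distrib, sum_add_distrib, Equiv.sum_comp x β]
    exact sub_nonpos.2 hcost
  intro v
  have := (sum_eq_zero_iff_of_nonneg hslack).1 hsum v (mem_univ v)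
  exact ⟨hx v, by linarith⟩

theorem card_le_card_biUnion_eqNeighbors [DecidableEq L] (hopt : (α, β) ∈ DualOpt θ Lab)
    (s : Finset V) : #s ≤ #(s.biUnion (eqNeighbors θ Lab α β)) := by
  classical
  set N := s.biUnion (eqNeighbors θ Lab α β)
  by_contra! hlt
  let D := (s ×ˢ univ).filter fun p : V × L => p.2 ∈ Lab p.1 ∧ p.2 ∉ N
  have hD : ∀ p ∈ D, 0 < θ p.1 p.2 - (α p.1 + β p.2) := by
    intro p hp
    simp only [D, mem_filter, mem_product] at hp
    obtain ⟨⟨hps, -⟩, hpl, hpN⟩ := hp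
    refine sub_pos.2 ((hopt.1 p.1 p.2 hpl).lt_of_ne fun heq => hpN ?_)
    exact mem_biUnion.2 ⟨p.1, hps, mem_eqNeighbors.2 ⟨hpl, heq⟩⟩
  obtain ⟨ε, hε, hεD⟩ := D.exists_pos_le_of_forall_pos _ hD
  have hfeas : DualFeasible θ Lab (dualShift s N ε α β) := by
    refine dualFeasible_dualShift s N ε hopt.1 hε.le fun v hv ℓ hℓ hN => ?_
    have := hεD (v, ℓ) (by simp [D, hv, hℓ, hN])
    linarith
  have hgain : 0 < ((#s : ℝ) - #N) * ε := mul_pos (sub_pos.2 (by exact_mod_cast hlt)) hε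
  have := hopt.2 _ hfeas
  rw [dualObj_dualShift] at this
  linarith

theorem exists_isPerfectMatching (hopt : (α, β) ∈ DualOpt θ Lab) (e : V ≃ L) :
    ∃ y : V ≃ L, IsPerfectMatching (EqEdge θ Lab α β) y := by
  classical
  obtain ⟨f, hf, hfE⟩ := (all_card_le_biUnion_card_iff_exists_injective _).1
    (card_le_card_biUnion_eqNeighbors hopt)
  have hbij := (Fintype.bijective_iff_injective_and_card f).2 ⟨hf, Fintype.card_congr e⟩
  exact ⟨.ofBijective f hbij, fun v => mem_eqNeighbors.1 (hfE v)⟩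

theorem isPerfectMatching_of_optimalAssignment (hopt : (α, β) ∈ DualOpt θ Lab) {x : V ≃ L}
    (hx : OptimalAssignment θ Lab x) : IsPerfectMatching (EqEdge θ Lab α β) x := by
  obtain ⟨y, hy⟩ := exists_isPerfectMatching hopt x
  refine isPerfectMatching_of_assignCost_le hopt.1 hx.1 ?_
  exact (hx.2 y (feasibleAssignment_of_isPerfectMatching hy)).trans_eq
    (assignCost_eq_of_isPerfectMatching hy)

end LAP

theorem statement3_general {V L : Type*} [Fintype V] [Fintype L]
    (θ : V → L → ℝ) (Lab : V → Finset L)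
    (α : V → ℝ) (β : L → ℝ) (hopt : (α, β) ∈ DualOpt θ Lab) :
    ∀ v ℓ, ℓ ∈ Lab v →
      (MinimallyAssignable θ Lab v ℓ ↔ PerfectlyMatchable (EqEdge θ Lab α β) v ℓ) := by
  intro v ℓ _
  constructor
  · rintro ⟨x, hx, hxv⟩
    exact ⟨x, LAP.isPerfectMatching_of_optimalAssignment hopt hx, hxv⟩
  · rintro ⟨x, hx, hxv⟩
    exact ⟨x, LAP.optimalAssignment_of_isPerfectMatching hopt.1 hx, hxv⟩

/-- Lemma 1: for a dual-optimal `(α, β)`, a pair is minimally assignable iff the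
corresponding edge is perfectly matchable in the equality subgraph. -/
theorem statement3 {V L : Type*} [Fintype V] [Fintype L] [DecidableEq V] [DecidableEq L]
    (θ : V → L → ℝ) (Lab : V → Finset L)
    (hfeas : ∃ x : V ≃ L, FeasibleAssignment Lab x)
    (α : V → ℝ) (β : L → ℝ) (hopt : (α, β) ∈ DualOpt θ Lab) :
    ∀ v ℓ, ℓ ∈ Lab v →
      (MinimallyAssignable θ Lab v ℓ ↔ PerfectlyMatchable (EqEdge θ Lab α β) v ℓ) :=
  statement3_general θ Lab α β hopt
end

section
/- Let (α, β) be feasible for the dual LP of the LAP. Then (α, β) is optimal for the dual LP if and only if the equality subgraph (V ∪ L, E(α,β)) has a perfect matching. -/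
open Finset

/-!
Weak duality: summing the dual constraints along any feasible assignment bounds the dual
objective by its cost, with equality exactly when the assignment uses only tight edges. So a
perfect matching of the equality subgraph certifies dual optimality. Conversely, if the
equality subgraph has no perfect matching, Hall's theorem gives a set `S ⊆ V` whose tight
neighbourhood `N` is smaller than `S`; raising `α` by a small `ε > 0` on `S` and lowering `β`
by `ε` on `N` keeps the duals feasible and increases the objective by `ε (|S| - |N|) > 0`.
-/

open Filter Topology

theorem exists_equiv_forall_mem_of_card_le_biUnion_card {ι κ : Type*} [Fintype ι] [Fintype κ]
    [DecidableEq κ] {t : ι → Finset κ} (hcard : Fintype.card ι = Fintype.card κ)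
    (hHall : ∀ s : Finset ι, #s ≤ #(s.biUnion t)) : ∃ x : ι ≃ κ, ∀ i, x i ∈ t i := by
  obtain ⟨f, hinj, hmem⟩ := (all_card_le_biUnion_card_iff_exists_injective t).1 hHall
  exact ⟨.ofBijective f ((Fintype.bijective_iff_injective_and_card f).2 ⟨hinj, hcard⟩), hmem⟩

section LAPDuality

variable {V L : Type*} {θ : V → L → ℝ} {Lab : V → Finset L}

noncomputable def tightLabels (θ : V → L → ℝ) (Lab : V → Finset L) (α : V → ℝ) (β : L → ℝ)
    (v : V) : Finset L :=
  (Lab v).filter fun ℓ => α v + β ℓ = θ v ℓ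

theorem mem_tightLabels {α : V → ℝ} {β : L → ℝ} {v : V} {ℓ : L} :
    ℓ ∈ tightLabels θ Lab α β v ↔ EqEdge θ Lab α β v ℓ :=
  mem_filter

def shiftDual [DecidableEq V] [DecidableEq L] (α : V → ℝ) (β : L → ℝ) (S : Finset V)
    (N : Finset L) (ε : ℝ) : (V → ℝ) × (L → ℝ) :=
  (fun v => α v + if v ∈ S then ε else 0, fun ℓ => β ℓ - if ℓ ∈ N then ε else 0)

theorem exists_pos_dualFeasible_shiftDual [DecidableEq V] [DecidableEq L] {α : V → ℝ}
    {β : L → ℝ} (hαβ : DualFeasible θ Lab (α, β)) {S : Finset V} {N : Finset L}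
    (hslack : ∀ v ∈ S, ∀ ℓ ∈ Lab v, ℓ ∉ N → α v + β ℓ < θ v ℓ) :
    ∃ ε > 0, DualFeasible θ Lab (shiftDual α β S N ε) := by
  have hsmall : ∀ᶠ ε in 𝓝[>] (0 : ℝ),
      ∀ v ∈ S, ∀ ℓ ∈ Lab v, ℓ ∉ N → ε ≤ θ v ℓ - α v - β ℓ := by
    refine (eventually_all_finset S).2 fun v hv => ?_
    refine (eventually_all_finset (Lab v)).2 fun ℓ hℓ =>
      eventually_imp_distrib_left.2 fun hℓN => ?_
    exact nhdsWithin_le_nhds (eventually_le_nhds (by linarith [hslack v hv ℓ hℓ hℓN]))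
  obtain ⟨ε, hε, hεpos⟩ := (hsmall.and self_mem_nhdsWithin).exists
  refine ⟨ε, hεpos, fun v ℓ hℓ => ?_⟩
  have hle := hαβ v ℓ hℓ
  have hε0 : (0 : ℝ) < ε := hεpos
  rcases em (v ∈ S) with hv | hv <;> rcases em (ℓ ∈ N) with hℓN | hℓN <;>
    simp only [shiftDual, hv, hℓN, if_true, if_false]
  · linarith
  · linarith [hε v hv ℓ hℓ hℓN]
  · linarith
  · linarith

variable [Fintype V] [Fintype L]

theorem dualObj_eq_sum_equiv (p : (V → ℝ) × (L → ℝ)) (x : V ≃ L) :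
    dualObj p = ∑ v, (p.1 v + p.2 (x v)) := by
  rw [dualObj, sum_add_distrib, x.sum_comp p.2]

theorem dualObj_le_assignCost {p : (V → ℝ) × (L → ℝ)} (hp : DualFeasible θ Lab p) {x : V ≃ L}
    (hx : FeasibleAssignment Lab x) : dualObj p ≤ assignCost θ x := by
  rw [dualObj_eq_sum_equiv p x, assignCost]
  exact sum_le_sum fun v _ => hp v (x v) (hx v)

theorem dualObj_eq_assignCost {α : V → ℝ} {β : L → ℝ} {x : V ≃ L}
    (hx : IsPerfectMatching (EqEdge θ Lab α β) x) : dualObj (α, β) = assignCost θ x := by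
  rw [dualObj_eq_sum_equiv _ x, assignCost]
  exact sum_congr rfl fun v _ => (hx v).2

theorem mem_dualOpt_of_isPerfectMatching {α : V → ℝ} {β : L → ℝ}
    (hαβ : DualFeasible θ Lab (α, β)) {x : V ≃ L} (hx : IsPerfectMatching (EqEdge θ Lab α β) x) :
    (α, β) ∈ DualOpt θ Lab :=
  ⟨hαβ, fun _ hq => (dualObj_le_assignCost hq fun v => (hx v).1).trans_eq
    (dualObj_eq_assignCost hx).symm⟩

theorem dualObj_shiftDual [DecidableEq V] [DecidableEq L] (α : V → ℝ) (β : L → ℝ)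
    (S : Finset V) (N : Finset L) (ε : ℝ) :
    dualObj (shiftDual α β S N ε) = dualObj (α, β) + ε * (#S - #N) := by
  simp only [dualObj, shiftDual, sum_add_distrib, sum_sub_distrib, sum_ite_mem, univ_inter,
    sum_const, nsmul_eq_mul]
  ring

theorem exists_dualFeasible_dualObj_lt_of_card_biUnion_lt [DecidableEq V] [DecidableEq L]
    {α : V → ℝ} {β : L → ℝ} (hαβ : DualFeasible θ Lab (α, β)) {S : Finset V}
    (hS : #(S.biUnion (tightLabels θ Lab α β)) < #S) :
    ∃ q, DualFeasible θ Lab q ∧ dualObj (α, β) < dualObj q := by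
  set N := S.biUnion (tightLabels θ Lab α β)
  have hslack : ∀ v ∈ S, ∀ ℓ ∈ Lab v, ℓ ∉ N → α v + β ℓ < θ v ℓ := fun v hv ℓ hℓ hℓN =>
    (hαβ v ℓ hℓ).lt_of_ne fun htight =>
      hℓN (mem_biUnion.2 ⟨v, hv, mem_tightLabels.2 ⟨hℓ, htight⟩⟩)
  obtain ⟨ε, hε, hfeas⟩ := exists_pos_dualFeasible_shiftDual hαβ hslack
  refine ⟨_, hfeas, ?_⟩
  rw [dualObj_shiftDual]
  exact lt_add_of_pos_right _ (mul_pos hε (sub_pos.2 (by exact_mod_cast hS)))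

theorem exists_isPerfectMatching_of_mem_dualOpt (hcard : Fintype.card V = Fintype.card L)
    {α : V → ℝ} {β : L → ℝ} (hopt : (α, β) ∈ DualOpt θ Lab) :
    ∃ x : V ≃ L, IsPerfectMatching (EqEdge θ Lab α β) x := by
  classical
  obtain ⟨x, hx⟩ := exists_equiv_forall_mem_of_card_le_biUnion_card hcard fun S => by
    by_contra! hS
    obtain ⟨q, hq, hlt⟩ := exists_dualFeasible_dualObj_lt_of_card_biUnion_lt hopt.1 hS
    exact (hopt.2 q hq).not_gt hlt
  exact ⟨x, fun v => mem_tightLabels.1 (hx v)⟩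

end LAPDuality

theorem statement4_general {V L : Type*} [Fintype V] [Fintype L]
    (θ : V → L → ℝ) (Lab : V → Finset L)
    (hfeas : ∃ x : V ≃ L, FeasibleAssignment Lab x)
    (α : V → ℝ) (β : L → ℝ) (hαβ : DualFeasible θ Lab (α, β)) :
    (α, β) ∈ DualOpt θ Lab ↔
      ∃ x : V ≃ L, IsPerfectMatching (EqEdge θ Lab α β) x := by
  obtain ⟨x₀, -⟩ := hfeas
  exact ⟨exists_isPerfectMatching_of_mem_dualOpt (Fintype.card_congr x₀),
    fun ⟨_, hx⟩ => mem_dualOpt_of_isPerfectMatching hαβ hx⟩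

/-- Theorem 2(a): a dual-feasible `(α, β)` is dual optimal iff the equality subgraph
has a perfect matching. -/
theorem statement4 {V L : Type*} [Fintype V] [Fintype L] [DecidableEq V] [DecidableEq L]
    (θ : V → L → ℝ) (Lab : V → Finset L)
    (hfeas : ∃ x : V ≃ L, FeasibleAssignment Lab x)
    (α : V → ℝ) (β : L → ℝ) (hαβ : DualFeasible θ Lab (α, β)) :
    (α, β) ∈ DualOpt θ Lab ↔
      ∃ x : V ≃ L, IsPerfectMatching (EqEdge θ Lab α β) x :=
  statement4_general θ Lab hfeas α β hαβ
end

section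
/- Let (V ∪ L, E) be a bipartite graph with a perfect matching x. Let {v, ℓ} ∈ E and let u ∈ V be the vertex with x_u = ℓ. Then the edge {v, ℓ} is perfectly matchable in (V ∪ L, E) if and only if x_v = ℓ or the directed edge (v, u) ∈ F_x(E) is part of a directed cycle in the directed graph (V, F_x(E)). -/
open Finset

/-!
A perfect matching `y` differs from `x` by the permutation `σ = x⁻¹ ∘ y` of `V`, and `y` is a
perfect matching exactly when every vertex `c` moved by `σ` spans an edge `c → σ c` of
`F_x(E)`. If `y v = ℓ = x u` with `u ≠ v`, the cycle of `σ` through `v` is a directed cycle of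
`F_x(E)` starting with the edge `(v, u)`; conversely, rotating the matching `x` along such a
cycle yields a perfect matching that matches `v` to `ℓ`.
-/

open Equiv

theorem List.Nodup.map_formPerm_eq_rotate_one {α : Type*} [DecidableEq α] {l : List α}
    (hl : l.Nodup) : l.map l.formPerm = l.rotate 1 := by
  rw [← List.pmap_next_eq_rotate_one _ hl]
  exact List.ext_getElem (by simp) fun i _ _ => by
    simp [List.formPerm_apply_mem_eq_next hl]

theorem edgeOnDirectedCycle_iff_formPerm {α : Type*} [DecidableEq α] {F : α → α → Prop}
    {a b : α} :
    EdgeOnDirectedCycle F a b ↔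
      ∃ l : List α, (a :: b :: l).Nodup ∧ ∀ c ∈ a :: b :: l, F c ((a :: b :: l).formPerm c) := by
  refine exists_congr fun l => and_congr_right fun hl => ?_
  calc _ ↔ List.IsChain F (a :: b :: l ++ [a]) := by
        rw [List.isChain_append]
        exact and_congr_right fun _ => by simp [List.getLast?_eq_some_getLast]
    _ ↔ List.Forall₂ F (a :: b :: l) ((a :: b :: l).map (a :: b :: l).formPerm) := by
        rw [List.isChain_cons_append_singleton_iff_forall₂, hl.map_formPerm_eq_rotate_one,
          List.rotate_cons_succ, List.rotate_zero]
    _ ↔ _ := by rw [List.forall₂_map_right_iff, List.forall₂_same]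

theorem Equiv.Perm.exists_toList_eq_cons_cons {α : Type*} [Fintype α] [DecidableEq α]
    {σ : Perm α} {a : α} (ha : σ a ≠ a) : ∃ t, σ.toList a = a :: σ a :: t := by
  have hlen := Perm.two_le_length_toList_iff_mem_support.2 (Perm.mem_support.2 ha)
  rw [Perm.length_toList] at hlen
  obtain ⟨n, hn⟩ := Nat.exists_eq_add_of_le' hlen
  exact ⟨_, by rw [Perm.toList, hn, List.iterate, List.iterate]⟩

theorem edgeOnDirectedCycle_iff_exists_perm {α : Type*} [Fintype α] [DecidableEq α]
    {F : α → α → Prop} {a b : α} :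
    EdgeOnDirectedCycle F a b ↔
      a ≠ b ∧ ∃ σ : Perm α, σ a = b ∧ ∀ c, σ c ≠ c → F c (σ c) := by
  rw [edgeOnDirectedCycle_iff_formPerm]
  constructor
  · rintro ⟨l, hl, hF⟩
    refine ⟨fun hab => by simp [hab] at hl, _, List.formPerm_apply_head a b l hl, fun c hc => ?_⟩
    exact hF c (by_contra fun hcl => hc (List.formPerm_apply_of_notMem hcl))
  · rintro ⟨hab, σ, rfl, hF⟩
    obtain ⟨t, ht⟩ := Perm.exists_toList_eq_cons_cons (Ne.symm hab)
    refine ⟨t, ht ▸ σ.nodup_toList a, fun c hc => ?_⟩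
    rw [← ht] at hc ⊢
    obtain ⟨hac, ha⟩ := Perm.mem_toList_iff.1 hc
    rw [List.formPerm_apply_mem_eq_next (σ.nodup_toList a) c hc, Perm.next_toList_eq_apply]
    exact hF c (Perm.mem_support.1 (hac.mem_support_iff.1 ha))

theorem isPerfectMatching_trans_iff {V L : Type*} {E : V → L → Prop} {x : V ≃ L}
    (hx : IsPerfectMatching E x) (σ : Perm V) :
    IsPerfectMatching E (σ.trans x) ↔ ∀ c, σ c ≠ c → Fdir E x c (σ c) := by
  refine ⟨fun hσ c hc => ⟨Ne.symm hc, hσ c⟩, fun hF c => ?_⟩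
  by_cases hc : σ c = c
  · simpa [hc] using hx c
  · exact (hF c hc).2

theorem statement6_general {V L : Type*} [Fintype V] [DecidableEq V]
    (E : V → L → Prop) (x : V ≃ L) (hx : IsPerfectMatching E x)
    (v : V) (ℓ : L) (u : V) (hu : x u = ℓ) :
    PerfectlyMatchable E v ℓ ↔
      (x v = ℓ ∨ EdgeOnDirectedCycle (Fdir E x) v u) := by
  rw [edgeOnDirectedCycle_iff_exists_perm]
  constructor
  · rintro ⟨y, hy, hyv⟩
    refine or_iff_not_imp_left.2 fun hxv =>
      ⟨fun hvu => hxv (hvu ▸ hu), y.trans x.symm, by simp [hyv, ← hu], ?_⟩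
    rwa [← isPerfectMatching_trans_iff hx, Equiv.trans_assoc, Equiv.symm_trans_self,
      Equiv.trans_refl]
  · rintro (hxv | ⟨-, σ, hσ, hF⟩)
    · exact ⟨x, hx, hxv⟩
    · exact ⟨σ.trans x, (isPerfectMatching_trans_iff hx σ).2 hF, by simp [hσ, hu]⟩

/-- Theorem 3: in a bipartite graph with a perfect matching `x`, an edge `{v, ℓ}` (with
`x u = ℓ`) is perfectly matchable iff `x v = ℓ` or the directed edge `(v, u)` of `F_x(E)`
lies on a directed cycle of `(V, F_x(E))`. -/
theorem statement6 {V L : Type*} [Fintype V] [Fintype L] [DecidableEq V] [DecidableEq L]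
    (E : V → L → Prop) (x : V ≃ L) (hx : IsPerfectMatching E x)
    (v : V) (ℓ : L) (hE : E v ℓ) (u : V) (hu : x u = ℓ) :
    PerfectlyMatchable E v ℓ ↔
      (x v = ℓ ∨ EdgeOnDirectedCycle (Fdir E x) v u) :=
  statement6_general E x hx v ℓ u hu
end

section
/- Let (α, β) be optimal for the dual LP of the LAP, let x be an optimal assignment for the LAP (equivalently, a perfect matching in the equality subgraph E(α,β)), and let S ⊆ V be a strongly connected component of the directed graph (V, F_x(E(α,β))) such that no edge (u, w) ∈ F_x(E(α,β)) has u ∈ S and w ∉ S. Let L_S = {x_v : v ∈ S}, let δ = min{θ_v(ℓ) − α_v − β_ℓ : v ∈ S, ℓ ∈ L_v ∖ L_S} if this set is nonempty and δ = 1 otherwise, and define α'_v = α_v + δ/2 for v ∈ S and α'_v = α_v otherwise, β'_ℓ = β_ℓ − δ/2 for ℓ ∈ L_S and β'_ℓ = β_ℓ otherwise. Then: (a) (α', β') is optimal for the dual LP; (b) E(α',β') = E(α,β) ∖ {{v,ℓ} ∈ E(α,β) : ℓ ∈ L_S, v ∉ S}; (c) F_x(E(α',β')) = F_x(E(α,β))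 ∖ {(v,u) ∈ F_x(E(α,β)) : v ∈ V ∖ S, u ∈ S}. -/
open Finset

/-!
Raising `α` by `δ/2` on `S` and lowering `β` by `δ/2` on `L_S = x(S)` leaves the objective
unchanged, because `x` matches `S` bijectively onto `L_S`. Constraints between `S` and `L_S`
and between `V ∖ S` and `L ∖ L_S` are unaffected; those from `V ∖ S` to `L_S` gain slack `δ/2`,
hence lose tightness; and those from `S` to `L ∖ L_S` lose slack `δ/2 < δ`. The latter had
positive slack to begin with, since a tight one would be an edge of `F_x` leaving `S`, so `δ > 0`
and the shifted pair is still feasible, hence optimal.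
-/

theorem mem_dualOpt_of_dualObj_eq {V L : Type*} [Fintype V] [Fintype L] {θ : V → L → ℝ}
    {Lab : V → Finset L} {p q : (V → ℝ) × (L → ℝ)} (hp : p ∈ DualOpt θ Lab)
    (hq : DualFeasible θ Lab q) (hobj : dualObj q = dualObj p) : q ∈ DualOpt θ Lab :=
  ⟨hq, fun r hr => hobj ▸ hp.2 r hr⟩

section DualShift

variable {V L : Type*} [DecidableEq V]
  {θ : V → L → ℝ} {Lab : V → Finset L} {α : V → ℝ} {β : L → ℝ} {x : V ≃ L} {S : Finset V}

theorem dualObj_shift [Fintype V] [Fintype L] (c : ℝ) :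
    dualObj (fun w => if w ∈ S then α w + c else α w,
      fun ℓ => if x.symm ℓ ∈ S then β ℓ - c else β ℓ) = dualObj (α, β) := by
  simp only [dualObj, ← Equiv.sum_comp x, ← Finset.sum_add_distrib, Equiv.symm_apply_apply]
  refine Finset.sum_congr rfl fun v _ => ?_
  split_ifs <;> ring

theorem DualFeasible.shift {c : ℝ} (hfeas : DualFeasible θ Lab (α, β)) (hc : 0 ≤ c)
    (hslack : ∀ v ∈ S, ∀ ℓ ∈ Lab v, x.symm ℓ ∉ S → c ≤ θ v ℓ - α v - β ℓ) :
    DualFeasible θ Lab (fun w => if w ∈ S then α w + c else α w,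
      fun ℓ => if x.symm ℓ ∈ S then β ℓ - c else β ℓ) := by
  intro v ℓ hℓ
  have := hfeas v ℓ hℓ
  dsimp only
  by_cases hv : v ∈ S <;> by_cases hl : x.symm ℓ ∈ S <;> simp only [hv, hl, if_true, if_false]
  · linarith
  · linarith [hslack v hv ℓ hℓ hl]
  · linarith
  · linarith

theorem eqEdge_shift_iff {c : ℝ} (hfeas : DualFeasible θ Lab (α, β)) (hc : 0 < c)
    (hslack : ∀ v ∈ S, ∀ ℓ ∈ Lab v, x.symm ℓ ∉ S → c < θ v ℓ - α v - β ℓ) (w : V) (ℓ : L) :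
    EqEdge θ Lab (fun w => if w ∈ S then α w + c else α w)
        (fun ℓ => if x.symm ℓ ∈ S then β ℓ - c else β ℓ) w ℓ ↔
      EqEdge θ Lab α β w ℓ ∧ ¬(x.symm ℓ ∈ S ∧ w ∉ S) := by
  unfold EqEdge
  by_cases hw : w ∈ S <;> by_cases hl : x.symm ℓ ∈ S <;> simp only [hw, hl, if_true, if_false]
  · constructor
    · rintro ⟨hℓ, h⟩; exact ⟨⟨hℓ, by linarith⟩, by tauto⟩
    · rintro ⟨⟨hℓ, h⟩, -⟩; exact ⟨hℓ, by linarith⟩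
  · constructor
    · rintro ⟨hℓ, h⟩; linarith [hslack w hw ℓ hℓ hl]
    · rintro ⟨⟨hℓ, h⟩, -⟩; linarith [hslack w hw ℓ hℓ hl]
  · constructor
    · rintro ⟨hℓ, h⟩; linarith [hfeas w ℓ hℓ]
    · tauto
  · tauto

end DualShift

theorem fdir_iff_of_eqEdge_iff {V L : Type*} {E E' : V → L → Prop} (x : V ≃ L) (S : Set V)
    (hE : ∀ w ℓ, E' w ℓ ↔ E w ℓ ∧ ¬(x.symm ℓ ∈ S ∧ w ∉ S)) (a b : V) :
    Fdir E' x a b ↔ Fdir E x a b ∧ ¬(a ∉ S ∧ b ∈ S) := by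
  simp only [Fdir, hE, Equiv.symm_apply_apply]
  tauto

theorem DualFeasible.add_lt_of_closed {V L : Type*} {θ : V → L → ℝ} {Lab : V → Finset L}
    {α : V → ℝ} {β : L → ℝ} (hfeas : DualFeasible θ Lab (α, β)) {x : V ≃ L} {S : Set V}
    (hout : ∀ u ∈ S, ∀ w, Fdir (EqEdge θ Lab α β) x u w → w ∈ S)
    {v : V} (hv : v ∈ S) {ℓ : L} (hℓ : ℓ ∈ Lab v) (hl : x.symm ℓ ∉ S) :
    α v + β ℓ < θ v ℓ := by
  refine (hfeas v ℓ hℓ).lt_of_ne fun htight => hl (hout v hv _ ⟨?_, ?_⟩)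
  · rintro rfl; exact hl hv
  · simpa [EqEdge] using ⟨hℓ, htight⟩

section InfOrOne

variable {ι : Type*} {T : Finset ι} {f : ι → ℝ} {δ : ℝ}

theorem pos_of_dite_inf' (hδ : if h : T.Nonempty then δ = T.inf' h f else δ = 1)
    (hf : ∀ p ∈ T, 0 < f p) : 0 < δ := by
  split_ifs at hδ with h
  · exact hδ ▸ (Finset.lt_inf'_iff h).2 hf
  · exact hδ ▸ one_pos

theorem le_of_dite_inf' (hδ : if h : T.Nonempty then δ = T.inf' h f else δ = 1)
    {p : ι} (hp : p ∈ T) : δ ≤ f p := by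
  rw [dif_pos ⟨p, hp⟩] at hδ
  exact hδ ▸ Finset.inf'_le f hp

end InfOrOne

theorem statement7_general {V L : Type*} [Fintype V] [Fintype L] [DecidableEq V] [DecidableEq L]
    (θ : V → L → ℝ) (Lab : V → Finset L)
    (α : V → ℝ) (β : L → ℝ) (hopt : (α, β) ∈ DualOpt θ Lab)
    (x : V ≃ L)
    (S : Finset V)
    (hout : ∀ u ∈ S, ∀ w, Fdir (EqEdge θ Lab α β) x u w → w ∈ S)
    (T : Finset (V × L))
    (hT : T = (S ×ˢ (univ : Finset L)).filter
      (fun p => p.2 ∈ Lab p.1 ∧ x.symm p.2 ∉ S))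
    (δ : ℝ)
    (hδ : if h : T.Nonempty then δ = T.inf' h (fun p => θ p.1 p.2 - α p.1 - β p.2)
          else δ = 1)
    (α' : V → ℝ) (β' : L → ℝ)
    (hα' : α' = fun w => if w ∈ S then α w + δ / 2 else α w)
    (hβ' : β' = fun ℓ' => if x.symm ℓ' ∈ S then β ℓ' - δ / 2 else β ℓ') :
    (α', β') ∈ DualOpt θ Lab ∧
    (∀ w ℓ', EqEdge θ Lab α' β' w ℓ' ↔
      (EqEdge θ Lab α β w ℓ' ∧ ¬(x.symm ℓ' ∈ S ∧ w ∉ S))) ∧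
    (∀ a b, Fdir (EqEdge θ Lab α' β') x a b ↔
      (Fdir (EqEdge θ Lab α β) x a b ∧ ¬(a ∉ S ∧ b ∈ S))) := by
  subst hα' hβ' hT
  have hδpos : 0 < δ := pos_of_dite_inf' hδ fun p hp => by
    simp only [Finset.mem_filter, Finset.mem_product] at hp
    linarith [hopt.1.add_lt_of_closed (S := ↑S) hout hp.1.1 hp.2.1 hp.2.2]
  have hslack : ∀ v ∈ S, ∀ ℓ ∈ Lab v, x.symm ℓ ∉ S → δ / 2 < θ v ℓ - α v - β ℓ :=
    fun v hv ℓ hℓ hl => by linarith [le_of_dite_inf' hδ (p := (v, ℓ)) (by simp [hv, hℓ, hl])]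
  have hE := eqEdge_shift_iff hopt.1 (half_pos hδpos) hslack
  have hfeas' := hopt.1.shift (half_pos hδpos).le fun v hv ℓ hℓ hl => (hslack v hv ℓ hℓ hl).le
  exact ⟨mem_dualOpt_of_dualObj_eq hopt hfeas' (dualObj_shift _), hE,
    fdir_iff_of_eqEdge_iff x ↑S hE⟩

/-- Lemma 2: updating a dual-optimal solution on a strongly connected component `S` of
`(V, F_x(E(α,β)))` with no outgoing edges keeps dual optimality and removes from the
equality subgraph exactly the edges between `V ∖ S` and `L_S = x(S)`. -/
theorem statement7 {V L : Type*} [Fintype V] [Fintype L] [DecidableEq V] [DecidableEq L]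
    (θ : V → L → ℝ) (Lab : V → Finset L)
    (α : V → ℝ) (β : L → ℝ) (hopt : (α, β) ∈ DualOpt θ Lab)
    (x : V ≃ L) (hx : OptimalAssignment θ Lab x)
    (S : Finset V)
    (hSCC : IsSCC (Fdir (EqEdge θ Lab α β) x) (↑S : Set V))
    (hout : ∀ u ∈ S, ∀ w, Fdir (EqEdge θ Lab α β) x u w → w ∈ S)
    (T : Finset (V × L))
    (hT : T = (S ×ˢ (univ : Finset L)).filter
      (fun p => p.2 ∈ Lab p.1 ∧ x.symm p.2 ∉ S))
    (δ : ℝ)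
    (hδ : if h : T.Nonempty then δ = T.inf' h (fun p => θ p.1 p.2 - α p.1 - β p.2)
          else δ = 1)
    (α' : V → ℝ) (β' : L → ℝ)
    (hα' : α' = fun w => if w ∈ S then α w + δ / 2 else α w)
    (hβ' : β' = fun ℓ' => if x.symm ℓ' ∈ S then β ℓ' - δ / 2 else β ℓ') :
    (α', β') ∈ DualOpt θ Lab ∧
    (∀ w ℓ', EqEdge θ Lab α' β' w ℓ' ↔
      (EqEdge θ Lab α β w ℓ' ∧ ¬(x.symm ℓ' ∈ S ∧ w ∉ S))) ∧
    (∀ a b, Fdir (EqEdge θ Lab α' β') x a b ↔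
      (Fdir (EqEdge θ Lab α β) x a b ∧ ¬(a ∉ S ∧ b ∈ S))) :=
  statement7_general θ Lab α β hopt x S hout T hT δ hδ α' β' hα' hβ'
end

section
/- Let x be a feasible assignment for the ILAP P. Define x' : V' → L' by: x'_v = x_v if v ∈ V and x_v ≠ #; x'_v = v if v ∈ V and x_v = #; x'_ℓ = u if ℓ ∈ L∖{#} and u ∈ V satisfies x_u = ℓ; x'_ℓ = ℓ if ℓ ∈ L∖{#} and no u ∈ V has x_u = ℓ. Then x' is a feasible assignment for the LAP P' (a bijection V' → L' with x'_w ∈ L'_w for all w ∈ V'), and Σ_{w∈V'} θ'_w(x'_w) = Σ_{v∈V} θ_v(x_v). -/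
open Finset

/-! Incomplete LAP (ILAP): labels are `Option K`, the dummy label `#` is `none`.
The reduced complete LAP instance `P'` lives on `V ⊕ K` (both partitions equal
`V ∪ (L ∖ {#})`). -/

section IlapDefs

variable {V K : Type*} [Fintype V] [Fintype K] [DecidableEq V] [DecidableEq K]

/-- Feasibility for the ILAP: allowed labels, and each non-dummy label used at most once. -/
def IlapFeasible (Lab : V → Finset (Option K)) (x : V → Option K) : Prop :=
  (∀ v, x v ∈ Lab v) ∧ ∀ u v k, x u = some k → x v = some k → u = v

/-- Cost of an ILAP assignment. -/
def ilapCost (θ : V → Option K → ℝ) (x : V → Option K) : ℝ := ∑ v, θ v (x v)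

/-- Allowed labels of the reduced LAP instance `P'` on `V ⊕ K`:
`L'_v = (L_v ∖ {#}) ∪ {v}` and `L'_ℓ = V_ℓ ∪ {ℓ}`. -/
def redLab (Lab : V → Finset (Option K)) : V ⊕ K → Finset (V ⊕ K)
  | Sum.inl v => insert (Sum.inl v) ((univ.filter fun k => some k ∈ Lab v).image Sum.inr)
  | Sum.inr k => insert (Sum.inr k) ((univ.filter fun v => some k ∈ Lab v).image Sum.inl)

/-- Costs of the reduced LAP instance `P'`: halved original costs between `V` and `L ∖ {#}`,
`θ_v(#)` on the vertex diagonal and `0` on the label diagonal. -/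
noncomputable def redCost (θ : V → Option K → ℝ) : V ⊕ K → V ⊕ K → ℝ
  | Sum.inl v, Sum.inr k => θ v (some k) / 2
  | Sum.inr k, Sum.inl v => θ v (some k) / 2
  | Sum.inl v, Sum.inl _ => θ v none
  | Sum.inr _, Sum.inr _ => 0

/-- Feasibility for the primal LP formulation of the ILAP. -/
def IlapPrimalFeasible (Lab : V → Finset (Option K)) (μ : V → Option K → ℝ) : Prop :=
  (∀ v ℓ, ℓ ∈ Lab v → 0 ≤ μ v ℓ) ∧
  (∀ v ℓ, ℓ ∉ Lab v → μ v ℓ = 0) ∧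
  (∀ v, ∑ ℓ ∈ Lab v, μ v ℓ = 1) ∧
  (∀ k : K, ∑ v ∈ univ.filter (fun v => some k ∈ Lab v), μ v (some k) ≤ 1)

/-- Objective of the primal LP formulation of the ILAP. -/
def ilapPrimalObj (θ : V → Option K → ℝ) (Lab : V → Finset (Option K))
    (μ : V → Option K → ℝ) : ℝ :=
  ∑ v, ∑ ℓ ∈ Lab v, θ v ℓ * μ v ℓ

/-- The set of optimal solutions of the primal LP formulation of the ILAP. -/
def IlapPrimalOpt (θ : V → Option K → ℝ) (Lab : V → Finset (Option K)) :
    Set (V → Option K → ℝ) :=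
  {μ | IlapPrimalFeasible Lab μ ∧
    ∀ ν, IlapPrimalFeasible Lab ν → ilapPrimalObj θ Lab μ ≤ ilapPrimalObj θ Lab ν}

/-- Feasibility for the dual LP formulation of the ILAP: `β ≤ 0` and
`α_v + [ℓ ≠ #]·β_ℓ ≤ θ_v(ℓ)` on allowed pairs. -/
def IlapDualFeasible (θ : V → Option K → ℝ) (Lab : V → Finset (Option K))
    (p : (V → ℝ) × (K → ℝ)) : Prop :=
  (∀ k, p.2 k ≤ 0) ∧
  ∀ v ℓ, ℓ ∈ Lab v →
    p.1 v + (match ℓ with | some k => p.2 k | none => 0) ≤ θ v ℓ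

/-- Objective of the dual LP formulation of the ILAP. -/
def ilapDualObj (p : (V → ℝ) × (K → ℝ)) : ℝ := ∑ v, p.1 v + ∑ k, p.2 k

/-- The set of optimal solutions of the dual LP formulation of the ILAP. -/
def IlapDualOpt (θ : V → Option K → ℝ) (Lab : V → Finset (Option K)) :
    Set ((V → ℝ) × (K → ℝ)) :=
  {p | IlapDualFeasible θ Lab p ∧
    ∀ q, IlapDualFeasible θ Lab q → ilapDualObj q ≤ ilapDualObj p}

end IlapDefs

/-!
The induced assignment `x'` is an involution of `V ⊕ L∖{#}`: it swaps `v` with `x_v` when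
`x_v ≠ #` and fixes every other element, so it is a bijection, and it stays inside the allowed
labels of `P'`. For the cost, an edge `v ↦ ℓ` of `x` appears twice in `x'`, once from each side,
and each occurrence is charged `θ_v(ℓ)/2`; a vertex with `x_v = #` is charged `θ_v(#)` on the
diagonal, and an unused label costs `0`.
-/

section InducedAssignment

variable {V K : Type*}

structure IsInducedAssignment (x : V → Option K) (x' : V ⊕ K → V ⊕ K) : Prop where
  inl_of_some : ∀ v k, x v = some k → x' (Sum.inl v) = Sum.inr k
  inr_of_some : ∀ v k, x v = some k → x' (Sum.inr k) = Sum.inl v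
  inl_of_none : ∀ v, x v = none → x' (Sum.inl v) = Sum.inl v
  inr_of_unused : ∀ k, (∀ u, x u ≠ some k) → x' (Sum.inr k) = Sum.inr k

namespace IsInducedAssignment

variable {x : V → Option K} {x' : V ⊕ K → V ⊕ K}

theorem involutive (hx' : IsInducedAssignment x x') : Function.Involutive x' := by
  rintro (v | k)
  · rcases hv : x v with _ | k
    · rw [hx'.inl_of_none v hv, hx'.inl_of_none v hv]
    · rw [hx'.inl_of_some v k hv, hx'.inr_of_some v k hv]
  · by_cases hk : ∃ u, x u = some k
    · obtain ⟨u, hu⟩ := hk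
      rw [hx'.inr_of_some u k hu, hx'.inl_of_some u k hu]
    · push Not at hk
      rw [hx'.inr_of_unused k hk, hx'.inr_of_unused k hk]

theorem mem_redLab [Fintype V] [Fintype K] [DecidableEq V] [DecidableEq K]
    (hx' : IsInducedAssignment x x') {Lab : V → Finset (Option K)}
    (hmem : ∀ v, x v ∈ Lab v) (w : V ⊕ K) : x' w ∈ redLab Lab w := by
  rcases w with v | k
  · rcases hv : x v with _ | k
    · simp [hx'.inl_of_none v hv, redLab]
    · simpa [hx'.inl_of_some v k hv, redLab, hv] using hmem v
  · by_cases hk : ∃ u, x u = some k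
    · obtain ⟨u, hu⟩ := hk
      simpa [hx'.inr_of_some u k hu, redLab, hu] using hmem u
    · push Not at hk
      simp [hx'.inr_of_unused k hk, redLab]

/-- Label `k` is charged half the cost of the (at most one) vertex assigned to it. -/
theorem redCost_inr [Fintype V] [DecidableEq K] (hx' : IsInducedAssignment x x')
    (hinj : ∀ u v k, x u = some k → x v = some k → u = v) (θ : V → Option K → ℝ) (k : K) :
    redCost θ (Sum.inr k) (x' (Sum.inr k)) =
      ∑ v, if x v = some k then θ v (some k) / 2 else 0 := by
  by_cases hk : ∃ u, x u = some k
  · obtain ⟨u, hu⟩ := hk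
    rw [hx'.inr_of_some u k hu, sum_eq_single u]
    · simp [redCost, hu]
    · intro v _ hvu
      exact if_neg fun hv => hvu (hinj v u k hv hu)
    · simp
  · push Not at hk
    rw [hx'.inr_of_unused k hk, sum_eq_zero fun v _ => if_neg (hk v)]
    rfl

theorem redCost_inl_add_sum [Fintype K] [DecidableEq K]
    (hx' : IsInducedAssignment x x') (θ : V → Option K → ℝ) (v : V) :
    redCost θ (Sum.inl v) (x' (Sum.inl v)) +
        ∑ k, (if x v = some k then θ v (some k) / 2 else 0) =
      θ v (x v) := by
  rcases hv : x v with _ | k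
  · simp [hx'.inl_of_none v hv, redCost]
  · simp only [hx'.inl_of_some v k hv, Option.some.injEq, sum_ite_eq, mem_univ, if_true,
      redCost]
    ring

theorem sum_redCost [Fintype V] [Fintype K] [DecidableEq K] (hx' : IsInducedAssignment x x')
    (hinj : ∀ u v k, x u = some k → x v = some k → u = v) (θ : V → Option K → ℝ) :
    ∑ w : V ⊕ K, redCost θ w (x' w) = ∑ v, θ v (x v) := by
  rw [Fintype.sum_sum_type]
  simp only [hx'.redCost_inr hinj θ]
  rw [sum_comm, ← sum_add_distrib]
  exact sum_congr rfl fun v _ => hx'.redCost_inl_add_sum θ v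

end IsInducedAssignment

end InducedAssignment

theorem statement9_general {V K : Type*} [Fintype V] [Fintype K] [DecidableEq V] [DecidableEq K]
    (Lab : V → Finset (Option K))
    (θ : V → Option K → ℝ)
    (x : V → Option K) (hx : IlapFeasible Lab x)
    (x' : V ⊕ K → V ⊕ K)
    (h1 : ∀ v k, x v = some k → x' (Sum.inl v) = Sum.inr k)
    (h2 : ∀ v k, x v = some k → x' (Sum.inr k) = Sum.inl v)
    (h3 : ∀ v, x v = none → x' (Sum.inl v) = Sum.inl v)
    (h4 : ∀ k, (∀ u, x u ≠ some k) → x' (Sum.inr k) = Sum.inr k) :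
    Function.Bijective x' ∧ (∀ w, x' w ∈ redLab Lab w) ∧
      ∑ w : V ⊕ K, redCost θ w (x' w) = ∑ v : V, θ v (x v) := by
  obtain ⟨hmem, hinj⟩ := hx
  have hx' : IsInducedAssignment x x' := ⟨h1, h2, h3, h4⟩
  exact ⟨hx'.involutive.bijective, hx'.mem_redLab hmem, hx'.sum_redCost hinj θ⟩

/-- Any feasible ILAP assignment `x` induces (via (15)) a feasible assignment `x'` of the
reduced LAP `P'` with the same cost. -/
theorem statement9 {V K : Type*} [Fintype V] [Fintype K] [DecidableEq V] [DecidableEq K]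
    (Lab : V → Finset (Option K)) (hdum : ∀ v, (none : Option K) ∈ Lab v)
    (θ : V → Option K → ℝ)
    (x : V → Option K) (hx : IlapFeasible Lab x)
    (x' : V ⊕ K → V ⊕ K)
    (h1 : ∀ v k, x v = some k → x' (Sum.inl v) = Sum.inr k)
    (h2 : ∀ v k, x v = some k → x' (Sum.inr k) = Sum.inl v)
    (h3 : ∀ v, x v = none → x' (Sum.inl v) = Sum.inl v)
    (h4 : ∀ k, (∀ u, x u ≠ some k) → x' (Sum.inr k) = Sum.inr k) :
    Function.Bijective x' ∧ (∀ w, x' w ∈ redLab Lab w) ∧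
      ∑ w : V ⊕ K, redCost θ w (x' w) = ∑ v : V, θ v (x v) :=
  statement9_general Lab θ x hx x' h1 h2 h3 h4
end
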